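/- Let f₁ : M → N₁ be an RD-embedding of R-modules and f₂ : M → N₂ an R-homomorphism, and let P = (N₁ ⊕ N₂)/D with D = {(f₁(m), −f₂(m)) : m ∈ M} be their pushout. Then the canonical map f̄₁ : N₂ → P, n₂ ↦ [(0, n₂)], is an RD-embedding; moreover, if f₂ is also an RD-embedding, then the canonical map f̄₂ : N₁ → P, n₁ ↦ [(n₁, 0)], is an RD-embedding. -/
import Mathlib


universe u

/-- `A` is an RD-submodule of its ambient module: for every `r : R`,
`A ∩ r • M = r • A`. -/
def IsRDSubmodule {R : Type*} [Ring R] {M : Type*} [AddCommGroup M] [Module R M]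
    (A : Submodule R M) : Prop :=
  ∀ (r : R) (x : M), x ∈ A → (∃ b : M, r • b = x) → ∃ a : M, a ∈ A ∧ r • a = x

/-- An RD-embedding is an injective linear map whose image is an RD-submodule
of its codomain. -/
def IsRDEmbedding {R : Type*} [Ring R] {M N : Type*} [AddCommGroup M] [Module R M]
    [AddCommGroup N] [Module R N] (f : M →ₗ[R] N) : Prop :=
  Function.Injective f ∧ IsRDSubmodule (LinearMap.range f)

theorem stmt2 {R M N₁ N₂ : Type u} [Ring R] [AddCommGroup M] [Module R M]
    [AddCommGroup N₁] [Module R N₁] [AddCommGroup N₂] [Module R N₂]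
    (f₁ : M →ₗ[R] N₁) (f₂ : M →ₗ[R] N₂) (hf₁ : IsRDEmbedding f₁) :
    -- `f̄₁ : N₂ → (N₁ ⊕ N₂)/D`, `n₂ ↦ [(0, n₂)]`, is an RD-embedding, where
    -- `D = {(f₁ m, -f₂ m) : m ∈ M}` is the range of `f₁.prod (-f₂)`
    IsRDEmbedding ((LinearMap.range (f₁.prod (-f₂))).mkQ.comp (LinearMap.inr R N₁ N₂)) ∧
    -- moreover, if `f₂` is also an RD-embedding, then `f̄₂ : N₁ → P`, `n₁ ↦ [(n₁, 0)]`,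
    -- is an RD-embedding
    (IsRDEmbedding f₂ →
      IsRDEmbedding ((LinearMap.range (f₁.prod (-f₂))).mkQ.comp (LinearMap.inl R N₁ N₂))) := by
  obtain ⟨hinj₁, hrd₁⟩ := hf₁
  set D := LinearMap.range (f₁.prod (-f₂)) with hD
  constructor
  · constructor
    · intro a b hab
      simp only [LinearMap.comp_apply, LinearMap.inr_apply, Submodule.mkQ_apply,
        Submodule.Quotient.eq] at hab
      obtain ⟨m, hm⟩ := hab
      have h1 : f₁ m = 0 := by
        have := congrArg Prod.fst hm; simpa using this
      have hm0 : m = 0 := hinj₁ (by simpa using h1)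
      have h2 : -f₂ m = a - b := by
        have := congrArg Prod.snd hm; simpa using this
      rw [hm0] at h2
      simp only [map_zero, neg_zero] at h2
      exact sub_eq_zero.mp h2.symm
    · rintro r x hx ⟨b, hb⟩
      obtain ⟨n₂, hn₂⟩ := hx
      obtain ⟨⟨y₁, y₂⟩, hy⟩ := D.mkQ_surjective b
      simp only [LinearMap.comp_apply, LinearMap.inr_apply, Submodule.mkQ_apply] at hn₂
      have key : Submodule.Quotient.mk (p := D) ((0, n₂) : N₁ × N₂)
          = Submodule.Quotient.mk (r • (y₁, y₂)) := by
        rw [Submodule.Quotient.mk_smul, hn₂, ← hb, ← hy]; rfl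
      rw [Submodule.Quotient.eq] at key
      obtain ⟨m, hm⟩ := key
      have h1 : f₁ m = r • (-y₁) := by
        have := congrArg Prod.fst hm; simpa [smul_neg] using this
      have h2 : -f₂ m = n₂ - r • y₂ := by
        have := congrArg Prod.snd hm; simpa using this
      obtain ⟨a, ⟨m', rfl⟩, ha2⟩ := hrd₁ r (f₁ m) ⟨m, rfl⟩ ⟨-y₁, h1.symm⟩
      have hmm : m = r • m' := hinj₁ (by rw [map_smul, ha2])
      rw [hmm, map_smul] at h2
      have h3 : n₂ = r • y₂ - r • f₂ m' := by
        have h4 := sub_eq_iff_eq_add.mp h2.symm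
        rw [h4, neg_add_eq_sub]
      refine ⟨(D.mkQ.comp (LinearMap.inr R N₁ N₂)) (y₂ - f₂ m'), ⟨y₂ - f₂ m', rfl⟩, ?_⟩
      simp only [LinearMap.comp_apply, LinearMap.inr_apply, Submodule.mkQ_apply]
      rw [← Submodule.Quotient.mk_smul, ← hn₂]
      congr 1
      simp [Prod.smul_mk, smul_sub, h3]
  · rintro ⟨hinj₂, hrd₂⟩
    constructor
    · intro a b hab
      simp only [LinearMap.comp_apply, LinearMap.inl_apply, Submodule.mkQ_apply,
        Submodule.Quotient.eq] at hab
      obtain ⟨m, hm⟩ := hab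
      have h2 : -f₂ m = 0 := by
        have := congrArg Prod.snd hm; simpa using this
      have hm0 : m = 0 := hinj₂ (by simpa [neg_eq_zero] using h2)
      have h1 : f₁ m = a - b := by
        have := congrArg Prod.fst hm; simpa using this
      rw [hm0, map_zero] at h1
      exact sub_eq_zero.mp h1.symm
    · rintro r x hx ⟨b, hb⟩
      obtain ⟨n₁, hn₁⟩ := hx
      obtain ⟨⟨y₁, y₂⟩, hy⟩ := D.mkQ_surjective b
      simp only [LinearMap.comp_apply, LinearMap.inl_apply, Submodule.mkQ_apply] at hn₁
      have key : Submodule.Quotient.mk (p := D) ((n₁, 0) : N₁ × N₂)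
          = Submodule.Quotient.mk (r • (y₁, y₂)) := by
        rw [Submodule.Quotient.mk_smul, hn₁, ← hb, ← hy]; rfl
      rw [Submodule.Quotient.eq] at key
      obtain ⟨m, hm⟩ := key
      have h1 : f₁ m = n₁ - r • y₁ := by
        have := congrArg Prod.fst hm; simpa using this
      have h2 : f₂ m = r • y₂ := by
        have := congrArg Prod.snd hm
        have h2' : -f₂ m = 0 - r • y₂ := by simpa using this
        have := h2'
        simp only [zero_sub] at this
        exact neg_injective (by simpa using this)
      obtain ⟨a, ⟨m', rfl⟩, ha2⟩ := hrd₂ r (f₂ m) ⟨m, rfl⟩ ⟨y₂, h2.symm⟩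
      have hmm : m = r • m' := hinj₂ (by rw [map_smul, ha2])
      rw [hmm, map_smul] at h1
      have h3 : n₁ = r • y₁ + r • f₁ m' := by
        have h4 := sub_eq_iff_eq_add.mp h1.symm
        rw [h4, add_comm]
      refine ⟨(D.mkQ.comp (LinearMap.inl R N₁ N₂)) (y₁ + f₁ m'), ⟨y₁ + f₁ m', rfl⟩, ?_⟩
      simp only [LinearMap.comp_apply, LinearMap.inl_apply, Submodule.mkQ_apply]
      rw [← Submodule.Quotient.mk_smul, ← hn₁]
      congr 1
      simp [Prod.smul_mk, smul_add, h3]
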